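/- arXiv:2404.17690 — 2 statements merged into one kernel-verified Lean document; each statement's English description precedes it below -/
import Mathlib

section
/- (Theorem 2) Let x be a nonzero real number and p ∈ (0,1). Let X̂ be the MinMax estimator of x (law p·δ_{x/p} + (1−p)·δ_0) and X̃ the B-MinMax estimator of x (law p·δ_x + (1−p)·δ_0). Then E[(X̃ − x)²] < E[(X̂ − x)²], i.e. the B-MinMax estimator has strictly smaller mean squared error than the MinMax estimator. -/
open MeasureTheory

lemma integral_two_point (f : ℝ → ℝ) (hf : Measurable f) (p : ℝ) (hp0 : 0 ≤ p)
    (hp1 : p ≤ 1) (a b : ℝ) :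
    ∫ y, f y ∂(ENNReal.ofReal p • Measure.dirac a +
        ENNReal.ofReal (1 - p) • Measure.dirac b) = p * f a + (1 - p) * f b := by
  have hd : ∀ c : ℝ, Integrable f (Measure.dirac c) := fun c =>
    ⟨hf.aestronglyMeasurable, by
      rw [HasFiniteIntegral, lintegral_dirac]; exact ENNReal.coe_lt_top⟩
  have h1 : Integrable f (ENNReal.ofReal p • Measure.dirac a) :=
    (hd a).smul_measure ENNReal.ofReal_ne_top
  have h2 : Integrable f (ENNReal.ofReal (1 - p) • Measure.dirac b) :=
    (hd b).smul_measure ENNReal.ofReal_ne_top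
  rw [integral_add_measure h1 h2, integral_smul_measure, integral_smul_measure,
    integral_dirac' f a hf.stronglyMeasurable, integral_dirac' f b hf.stronglyMeasurable,
    ENNReal.toReal_ofReal hp0, ENNReal.toReal_ofReal (by linarith)]
  simp [smul_eq_mul]

/-- Theorem 2: For nonzero `x` and `p ∈ (0,1)`, the B-MinMax estimator `X̃`
(law `p·δ_x + (1−p)·δ_0`) has strictly smaller MSE than the MinMax estimator
`X̂` (law `p·δ_{x/p} + (1−p)·δ_0`): `E[(X̃ − x)²] < E[(X̂ − x)²]`. -/
theorem bminmax_mse_lt_minmax_mse {Ω : Type*} [MeasurableSpace Ω] (μ : Measure Ω)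
    [IsProbabilityMeasure μ] (x p : ℝ) (hx : x ≠ 0) (hp : p ∈ Set.Ioo (0 : ℝ) 1)
    (Xhat Xtilde : Ω → ℝ) (hXhat : Measurable Xhat) (hXtilde : Measurable Xtilde)
    (hlawhat : Measure.map Xhat μ =
      ENNReal.ofReal p • Measure.dirac (x / p) +
        ENNReal.ofReal (1 - p) • Measure.dirac 0)
    (hlawtilde : Measure.map Xtilde μ =
      ENNReal.ofReal p • Measure.dirac x +
        ENNReal.ofReal (1 - p) • Measure.dirac 0) :
    ∫ ω, (Xtilde ω - x) ^ 2 ∂μ < ∫ ω, (Xhat ω - x) ^ 2 ∂μ := by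
  obtain ⟨hp0, hp1⟩ := hp
  have hf : Measurable fun y : ℝ => (y - x) ^ 2 := by measurability
  have e1 : ∫ ω, (Xtilde ω - x) ^ 2 ∂μ = ∫ y, (y - x) ^ 2 ∂(Measure.map Xtilde μ) :=
    (integral_map hXtilde.aemeasurable hf.aestronglyMeasurable).symm
  have e2 : ∫ ω, (Xhat ω - x) ^ 2 ∂μ = ∫ y, (y - x) ^ 2 ∂(Measure.map Xhat μ) :=
    (integral_map hXhat.aemeasurable hf.aestronglyMeasurable).symm
  rw [e1, e2, hlawhat, hlawtilde,
    integral_two_point _ hf p hp0.le hp1.le,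
    integral_two_point _ hf p hp0.le hp1.le]
  have hxp : x / p - x = x * (1 - p) / p := by field_simp
  rw [hxp]
  have hne : x * (1 - p) / p ≠ 0 :=
    div_ne_zero (mul_ne_zero hx (by linarith)) (ne_of_gt hp0)
  have h2 : 0 < (x * (1 - p) / p) ^ 2 := pow_two_pos_of_ne_zero hne
  nlinarith [mul_pos hp0 h2]
end

section
/- Let d ≥ 1, let x₁, …, x_d be nonzero real numbers, and let n be a real number with 0 < n < d. Then there exists a unique C > 0 such that ∑_{j=1}^{d} x_j²/(x_j² + C) = n. Moreover, for this C, every sampling probability p_j = x_j²/(x_j² + C) lies in the open interval (0,1). -/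
/-- For `d ≥ 1`, nonzero reals `x₁, …, x_d`, and `0 < n < d`, there exists a
unique `C > 0` with `∑ⱼ xⱼ²/(xⱼ² + C) = n`; moreover for this `C` every
sampling probability `pⱼ = xⱼ²/(xⱼ² + C)` lies in `(0,1)`. -/
theorem exists_unique_normalizing_constant (d : ℕ) (hd : 1 ≤ d) (x : Fin d → ℝ)
    (hx : ∀ j, x j ≠ 0) (n : ℝ) (hn : 0 < n) (hnd : n < d) :
    (∃! C : ℝ, 0 < C ∧ ∑ j, (x j) ^ 2 / ((x j) ^ 2 + C) = n) ∧
      ∀ C : ℝ, 0 < C → ∑ j, (x j) ^ 2 / ((x j) ^ 2 + C) = n →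
        ∀ j, (x j) ^ 2 / ((x j) ^ 2 + C) ∈ Set.Ioo (0 : ℝ) 1 := by
  have hx2 : ∀ j, 0 < (x j) ^ 2 := fun j =>
    lt_of_le_of_ne (sq_nonneg _) (Ne.symm (pow_ne_zero 2 (hx j)))
  have hne : (Finset.univ : Finset (Fin d)).Nonempty := ⟨⟨0, hd⟩, Finset.mem_univ _⟩
  set f : ℝ → ℝ := fun C => ∑ j, (x j) ^ 2 / ((x j) ^ 2 + C) with hf
  have hanti : ∀ C₁ C₂ : ℝ, 0 ≤ C₁ → C₁ < C₂ → f C₂ < f C₁ := by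
    intro C₁ C₂ h1 h12
    apply Finset.sum_lt_sum_of_nonempty hne
    intro j _
    exact div_lt_div_of_pos_left (hx2 j) (by linarith [hx2 j]) (by linarith)
  have hS : 0 < ∑ j, (x j) ^ 2 := Finset.sum_pos (fun j _ => hx2 j) hne
  set S := ∑ j, (x j) ^ 2 with hSdef
  set C₁ := S / n + 1 with hC₁
  have hC₁pos : 0 < C₁ := by positivity
  have hf0 : f 0 = d := by
    simp only [hf, add_zero]
    rw [Finset.sum_congr rfl (fun j _ => div_self (ne_of_gt (hx2 j)))]
    simp
  have hfC₁ : f C₁ < n := by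
    have h1 : f C₁ ≤ S / C₁ := by
      rw [hSdef, Finset.sum_div]
      apply Finset.sum_le_sum
      intro j _
      apply div_le_div_of_nonneg_left (le_of_lt (hx2 j)) hC₁pos
      linarith [hx2 j]
    have h2 : S / C₁ < n := by
      rw [div_lt_iff₀ hC₁pos]
      have hnC : n * C₁ = S + n := by
        rw [hC₁, mul_add, mul_div_assoc', mul_comm n S, mul_div_assoc, div_self hn.ne', mul_one, mul_one]
      rw [hnC]; linarith
    linarith
  have hcont : ContinuousOn f (Set.Icc 0 C₁) := by
    apply continuousOn_finset_sum
    intro j _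
    apply ContinuousOn.div continuousOn_const
    · exact (continuous_const.add continuous_id).continuousOn
    · intro C hC
      have := hx2 j
      have := hC.1
      intro h
      nlinarith
  have hmem : n ∈ f '' Set.Icc 0 C₁ := by
    apply intermediate_value_Icc' (le_of_lt hC₁pos) hcont
    exact ⟨le_of_lt hfC₁, by rw [hf0]; exact le_of_lt hnd⟩
  obtain ⟨C, hCmem, hCeq⟩ := hmem
  have hCpos : 0 < C := by
    rcases lt_or_eq_of_le hCmem.1 with h | h
    · exact h
    · exfalso; rw [← h] at hCeq; rw [hf0] at hCeq; linarith
  have probs : ∀ C : ℝ, 0 < C → ∑ j, (x j) ^ 2 / ((x j) ^ 2 + C) = n →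
      ∀ j, (x j) ^ 2 / ((x j) ^ 2 + C) ∈ Set.Ioo (0 : ℝ) 1 := by
    intro C hC _ j
    constructor
    · exact div_pos (hx2 j) (by linarith [hx2 j])
    · rw [div_lt_one (by linarith [hx2 j])]
      linarith
  refine ⟨⟨C, ⟨hCpos, hCeq⟩, ?_⟩, probs⟩
  rintro C' ⟨hC'pos, hC'eq⟩
  have hfC' : f C' = n := hC'eq
  rcases lt_trichotomy C' C with h | h | h
  · have := hanti C' C hC'pos.le h
    rw [hCeq, hfC'] at this
    exact absurd this (lt_irrefl n)
  · exact h
  · have := hanti C C' hCpos.le h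
    rw [hCeq, hfC'] at this
    exact absurd this (lt_irrefl n)
end
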